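/- arXiv:1512.08026 — 4 statements merged into one kernel-verified Lean document; each statement's English description precedes it below -/
import Mathlib

section
/- In a semigroup in which every element has at least one inverse element (i.e., for every x there exists y with xyx = x and yxy = y), inverses are unique if and only if all idempotents commute. -/
/-!
If idempotents commute and `y`, `z` are inverses of `x`, then `xy, xz` and `yx, zx` are
commuting idempotents, and
`y = y(xz)(xy) = y(xy)(xz) = yxz = (yx)(zx)z = (zx)(yx)z = zxz = z`.

Conversely, assume inverses are unique and let `e, f` be idempotents. For any inverse `y` of
`ef`, the element `g = fye` is an idempotent inverse of `ef`; being idempotent, `g` is its own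
inverse, while `ef` is another inverse of `g`, so `ef = g` is idempotent. Then both `ef` and
`fe` are inverses of `ef`, hence `ef = fe`.
-/

namespace Semigroup

variable {S : Type*} [Semigroup S]

def IsInverse (x y : S) : Prop := x * y * x = x ∧ y * x * y = y

lemma IsInverse.symm {x y : S} (h : IsInverse x y) : IsInverse y x := And.symm h

lemma IsInverse.isIdempotentElem_mul {x y : S} (h : IsInverse x y) :
    IsIdempotentElem (x * y) := by
  rw [IsIdempotentElem, ← mul_assoc, h.1]

lemma IsInverse.isIdempotentElem_mul' {x y : S} (h : IsInverse x y) :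
    IsIdempotentElem (y * x) :=
  h.symm.isIdempotentElem_mul

lemma _root_.IsIdempotentElem.isInverse_self {e : S} (he : IsIdempotentElem e) :
    IsInverse e e := by
  constructor <;> rw [he.eq, he.eq]

lemma _root_.IsIdempotentElem.isInverse_mul_swap {e f : S} (he : IsIdempotentElem e)
    (hf : IsIdempotentElem f) (hef : IsIdempotentElem (e * f)) (hfe : IsIdempotentElem (f * e)) :
    IsInverse (e * f) (f * e) := by
  constructor
  · calc e * f * (f * e) * (e * f) = (e * f) * (e * f) := by
          simp only [← mul_assoc, he.mul_mul_self, hf.mul_mul_self]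
      _ = e * f := hef.eq
  · calc f * e * (e * f) * (f * e) = (f * e) * (f * e) := by
          simp only [← mul_assoc, he.mul_mul_self, hf.mul_mul_self]
      _ = f * e := hfe.eq

lemma IsInverse.isInverse_mul_mul_of_isIdempotentElem {e f y : S} (hy : IsInverse (e * f) y)
    (he : IsIdempotentElem e) (hf : IsIdempotentElem f) : IsInverse (e * f) (f * y * e) := by
  constructor
  · simpa only [← mul_assoc, he.mul_mul_self, hf.mul_mul_self] using hy.1
  · simpa only [← mul_assoc, he.mul_mul_self, hf.mul_mul_self]
      using congrArg (f * · * e) hy.2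

lemma IsInverse.isIdempotentElem_mul_mul {e f y : S} (hy : IsInverse (e * f) y) :
    IsIdempotentElem (f * y * e) := by
  simpa only [IsIdempotentElem, ← mul_assoc] using congrArg (f * · * e) hy.2

lemma isIdempotentElem_mul_of_inverse_unique (hreg : ∀ x : S, ∃ y, IsInverse x y)
    (huniq : ∀ x y z : S, IsInverse x y → IsInverse x z → y = z) {e f : S}
    (he : IsIdempotentElem e) (hf : IsIdempotentElem f) : IsIdempotentElem (e * f) := by
  obtain ⟨y, hy⟩ := hreg (e * f)
  have hg := hy.isIdempotentElem_mul_mul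
  have hg_eq : f * y * e = e * f :=
    huniq _ _ _ hg.isInverse_self (hy.isInverse_mul_mul_of_isIdempotentElem he hf).symm
  exact hg_eq ▸ hg

lemma commute_of_inverse_unique (hreg : ∀ x : S, ∃ y, IsInverse x y)
    (huniq : ∀ x y z : S, IsInverse x y → IsInverse x z → y = z) {e f : S}
    (he : IsIdempotentElem e) (hf : IsIdempotentElem f) : e * f = f * e := by
  have hef := isIdempotentElem_mul_of_inverse_unique hreg huniq he hf
  have hfe := isIdempotentElem_mul_of_inverse_unique hreg huniq hf he
  exact huniq _ _ _ hef.isInverse_self (he.isInverse_mul_swap hf hef hfe)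

lemma IsInverse.unique_of_commute
    (hcomm : ∀ e f : S, IsIdempotentElem e → IsIdempotentElem f → e * f = f * e)
    {x y z : S} (hy : IsInverse x y) (hz : IsInverse x z) : y = z := by
  have hxy_xz := hcomm _ _ hz.isIdempotentElem_mul hy.isIdempotentElem_mul
  have hyx_zx := hcomm _ _ hy.isIdempotentElem_mul' hz.isIdempotentElem_mul'
  calc y = y * x * y := hy.2.symm
    _ = y * (x * z * x) * y := by rw [hz.1]
    _ = y * (x * y * (x * z)) := by rw [← hxy_xz]; simp only [mul_assoc]
    _ = y * x * y * (x * z) := by simp only [mul_assoc]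
    _ = y * x * (z * x * z) := by rw [hy.2, hz.2, mul_assoc]
    _ = z * x * (y * x) * z := by rw [← hyx_zx]; simp only [mul_assoc]
    _ = z * (x * y * x) * z := by simp only [mul_assoc]
    _ = z := by rw [hy.1, hz.2]

end Semigroup

/-- Vagner's theorem: in a semigroup in which every element has at least one
inverse element, inverses are unique iff all idempotents commute. -/
theorem stmt0 {S : Type*} [Semigroup S]
    (hreg : ∀ x : S, ∃ y : S, x * y * x = x ∧ y * x * y = y) :
    (∀ x y z : S, (x * y * x = x ∧ y * x * y = y) →
        (x * z * x = x ∧ z * x * z = z) → y = z)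
      ↔ (∀ e f : S, e * e = e → f * f = f → e * f = f * e) :=
  ⟨fun huniq _ _ he hf => Semigroup.commute_of_inverse_unique hreg huniq he hf,
    fun hcomm _ _ _ hy hz => Semigroup.IsInverse.unique_of_commute hcomm hy hz⟩
end

section
/- In the semigroup S = ℤ₊ \ {1} = {0, 2, 3, 4, ...} under addition, the constructible right ideals satisfy (2+S) ∪ (3+S) = (−3)+(2+S), where a+S = {a+x : x ∈ S} and (−a)+A = {x ∈ S : x+a ∈ A}. Explicitly: {2,4,5,6,...} ∪ {3,5,6,7,...} = {2,3,4,5,...}. -/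
theorem Nat.image_const_add_setOf_ne_one (a : ℕ) :
    (fun x => a + x) '' {n | n ≠ 1} = {n | a ≤ n ∧ n ≠ a + 1} := by
  ext n
  simp only [Set.mem_image, Set.mem_ofPred_eq]
  constructor
  · rintro ⟨x, hx, rfl⟩
    omega
  · intro hn
    exact ⟨n - a, by omega, by omega⟩

/-- In the semigroup `S = ℤ₊ \ {1} = {0,2,3,...}` under addition, the
constructible right ideals satisfy `(2+S) ∪ (3+S) = (−3)+(2+S)`, and
explicitly this set is `{2,3,4,...}`. -/
theorem stmt12 :
    let S : Set ℕ := {n | n ≠ 1}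
    ((fun x => 2 + x) '' S) ∪ ((fun x => 3 + x) '' S)
        = {x ∈ S | x + 3 ∈ (fun x => 2 + x) '' S} ∧
    ((fun x => 2 + x) '' S) ∪ ((fun x => 3 + x) '' S) = {n : ℕ | 2 ≤ n} := by
  intro S
  simp only [S, Nat.image_const_add_setOf_ne_one]
  have hU : {n | 2 ≤ n ∧ n ≠ 2 + 1} ∪ {n | 3 ≤ n ∧ n ≠ 3 + 1} = {n : ℕ | 2 ≤ n} := by
    ext n
    simp only [Set.mem_union, Set.mem_ofPred_eq]
    omega
  refine ⟨?_, hU⟩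
  rw [hU]
  ext n
  simp only [Set.mem_ofPred_eq]
  omega
end

section
/- Let S be a cancellative monoid in which any two principal left ideals intersect (right Ore / left reversible condition: Sp ∩ Sq ≠ ∅ for all p, q). Then S embeds into a group G with G = S⁻¹S (Ore–Dubreil theorem, embeddability direction). -/
/-!
Right cancellation and the Ore condition make all of `S` a left Ore set, so the Ore
localization `S⁻¹S` exists. In it every fraction `s⁻¹t` is the product of the units `s⁻¹`
and `t / 1`, so the localization is a group, and left cancellation makes `t ↦ t / 1`
injective.
-/

namespace OreLocalization

variable {S : Type*} [Monoid S]

noncomputable abbrev oreSetTop [IsRightCancelMul S] (hOre : ∀ p q : S, ∃ r s : S, r * p = s * q) :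
    OreSet (⊤ : Submonoid S) where
  ore_right_cancel r₁ r₂ _ h := ⟨1, by rw [mul_right_cancel h]⟩
  oreNum r s := (hOre r s).choose_spec.choose
  oreDenom r s := ⟨(hOre r s).choose, trivial⟩
  ore_eq r s := (hOre r s).choose_spec.choose_spec

section Top

variable [OreSet (⊤ : Submonoid S)]

theorem isUnit_of_top (x : S[(⊤ : Submonoid S)⁻¹]) : IsUnit x := by
  induction x with
  | _ r s =>
    have hs : IsUnit ((1 : S) /ₒ s) := (numeratorUnit s)⁻¹.isUnit
    have hr : IsUnit (numeratorHom r : S[(⊤ : Submonoid S)⁻¹]) :=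
      numerator_isUnit (⟨r, trivial⟩ : (⊤ : Submonoid S))
    simpa [numeratorHom_apply, OreLocalization.one_div_mul] using hs.mul hr

noncomputable instance : Group S[(⊤ : Submonoid S)⁻¹] := groupOfIsUnit isUnit_of_top

theorem oreDiv_eq_inv_mul (r : S) (s : (⊤ : Submonoid S)) :
    r /ₒ s = (numeratorHom (s : S) : S[(⊤ : Submonoid S)⁻¹])⁻¹ * numeratorHom r := by
  have hinv : (numeratorHom (s : S) : S[(⊤ : Submonoid S)⁻¹])⁻¹ = (1 : S) /ₒ s :=
    inv_eq_of_mul_eq_one_right (OreLocalization.mul_inv s 1)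
  rw [hinv, numeratorHom_apply, OreLocalization.one_div_mul, one_mul]

theorem numeratorHom_injective_of_top [IsLeftCancelMul S] :
    Function.Injective (numeratorHom : S →* S[(⊤ : Submonoid S)⁻¹]) := by
  intro a b h
  obtain ⟨u, v, hab, huv⟩ := oreDiv_eq_iff.mp h
  simp only [Submonoid.smul_def, smul_eq_mul, OneMemClass.coe_one, mul_one] at hab huv
  rw [huv] at hab
  exact (mul_left_cancel hab).symm

end Top

end OreLocalization

open OreLocalization in
/-- Ore–Dubreil: a cancellative monoid in which any two principal left ideals
intersect embeds into a group `G` of left quotients, `G = S⁻¹S`. -/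
theorem stmt15 {S : Type} [Monoid S]
    (hl : ∀ a b c : S, a * b = a * c → b = c)
    (hr : ∀ a b c : S, b * a = c * a → b = c)
    (hOre : ∀ p q : S, ∃ r s : S, r * p = s * q) :
    ∃ (G : Type) (_ : Group G) (φ : S →* G),
      Function.Injective φ ∧ ∀ g : G, ∃ s t : S, g = (φ s)⁻¹ * φ t := by
  have : IsLeftCancelMul S := ⟨hl⟩
  have : IsRightCancelMul S := ⟨hr⟩
  let := oreSetTop hOre
  refine ⟨S[(⊤ : Submonoid S)⁻¹], inferInstance, numeratorHom, numeratorHom_injective_of_top, ?_⟩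
  intro g
  induction g with
  | _ t s => exact ⟨s, t, oreDiv_eq_inv_mul t s⟩
end

section
/- Let G be a group and S(G) the inverse semigroup generated by symbols t_g (g ∈ G) with relations t_{g⁻¹} t_g t_h = t_{g⁻¹} t_{gh}, t_g t_h t_{h⁻¹} = t_{gh} t_{h⁻¹}, and t_g t_1 = t_g. Then in any quotient of S(G) in which additionally t_s* t_s = 1 for all s in a subsemigroup S with G = S⁻¹S, the images satisfy t̃_{s⁻¹p} = t̃_s* t̃_p and t̃_{sp} = t̃_s t̃_p for all s, p ∈ S. -/
section ExelRelations

variable {G P : Type*} [Group G] [Monoid P] {t : G → P}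

theorem map_inv_mul_of_isometry
    (hR1 : ∀ g h : G, t g⁻¹ * t g * t h = t g⁻¹ * t (g * h))
    {s : G} (hs : t s⁻¹ * t s = 1) (g : G) :
    t (s⁻¹ * g) = t s⁻¹ * t g :=
  calc t (s⁻¹ * g) = t s⁻¹ * t s * t (s⁻¹ * g) := by rw [hs, one_mul]
    _ = t s⁻¹ * t (s * (s⁻¹ * g)) := hR1 s (s⁻¹ * g)
    _ = t s⁻¹ * t g := by rw [mul_inv_cancel_left]

theorem map_mul_of_isometry
    (hR2 : ∀ g h : G, t g * t h * t h⁻¹ = t (g * h) * t h⁻¹)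
    {p : G} (hp : t p⁻¹ * t p = 1) (g : G) :
    t (g * p) = t g * t p :=
  calc t (g * p) = t (g * p) * t p⁻¹ * t p := by rw [mul_assoc, hp, mul_one]
    _ = t g * t p * t p⁻¹ * t p := by rw [hR2 g p]
    _ = t g * t p := by rw [mul_assoc (t g * t p), hp, mul_one]

end ExelRelations

theorem stmt18_general {G P : Type*} [Group G] [Monoid P]
    (S : Set G)
    (t : G → P)
    (hR1 : ∀ g h : G, t g⁻¹ * t g * t h = t g⁻¹ * t (g * h))
    (hR2 : ∀ g h : G, t g * t h * t h⁻¹ = t (g * h) * t h⁻¹)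
    (hisom : ∀ s ∈ S, t s⁻¹ * t s = 1) :
    ∀ s ∈ S, ∀ p ∈ S,
      t (s⁻¹ * p) = t s⁻¹ * t p ∧ t (s * p) = t s * t p :=
  fun s hs p hp =>
    ⟨map_inv_mul_of_isometry hR1 (hisom s hs) p, map_mul_of_isometry hR2 (hisom p hp) s⟩

/-- Let `G` be a group, `S ⊆ G` a subsemigroup with `G = S⁻¹S`, and let
`t : G → P` satisfy Exel's relations
`t_{g⁻¹} t_g t_h = t_{g⁻¹} t_{gh}`, `t_g t_h t_{h⁻¹} = t_{gh} t_{h⁻¹}`,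
`t_g t_1 = t_g`, i.e. `t` factors through Exel's inverse semigroup `S(G)`.
In any quotient in which additionally `t_s* t_s = 1` for all `s ∈ S`, the
images satisfy `t_{s⁻¹p} = t_{s⁻¹} t_p` and `t_{sp} = t_s t_p` for
`s, p ∈ S`. -/
theorem stmt18 {G P : Type*} [Group G] [Monoid P]
    (S : Set G) (hSmul : ∀ a ∈ S, ∀ b ∈ S, a * b ∈ S)
    (hOre : ∀ g : G, ∃ s ∈ S, ∃ p ∈ S, g = s⁻¹ * p)
    (t : G → P)
    (hR1 : ∀ g h : G, t g⁻¹ * t g * t h = t g⁻¹ * t (g * h))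
    (hR2 : ∀ g h : G, t g * t h * t h⁻¹ = t (g * h) * t h⁻¹)
    (hR3 : ∀ g : G, t g * t 1 = t g)
    (ht1 : t 1 = 1)
    (hisom : ∀ s ∈ S, t s⁻¹ * t s = 1) :
    ∀ s ∈ S, ∀ p ∈ S,
      t (s⁻¹ * p) = t s⁻¹ * t p ∧ t (s * p) = t s * t p :=
  stmt18_general S t hR1 hR2 hisom
end
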